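/- For a geometric Brownian motion P_t = P₀·exp((r - σ²/2)t + σ B_t) with P₀ > 0, σ > 0, r ∈ ℝ, t > 0 and K > 0, the discounted call price e^{-rt}·E[(P_t - K)^+] equals P₀ N(d₁) - e^{-rt} K N(d₂) with d₁ = (ln(P₀/K) + (r + σ²/2)t)/(σ√t), d₂ = d₁ - σ√t (Black–Scholes formula). -/
import Mathlib

open MeasureTheory ProbabilityTheory Real Set

noncomputable def stdNormalCDF (x : ℝ) : ℝ :=
  ∫ u in Set.Iic x, Real.exp (-u ^ 2 / 2) / Real.sqrt (2 * Real.pi)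

-- std normal pdf facts
lemma pdf_eq (y : ℝ) : gaussianPDFReal 0 1 y = Real.exp (-y ^ 2 / 2) / Real.sqrt (2 * Real.pi) := by
  simp [gaussianPDFReal, div_eq_inv_mul]

lemma stdCDF_eq (x : ℝ) : stdNormalCDF x = ∫ u in Set.Iic x, gaussianPDFReal 0 1 u := by
  simp [stdNormalCDF, pdf_eq]

-- integral against gaussianReal 0 1
lemma integral_gauss_one (g : ℝ → ℝ) :
    ∫ x, g x ∂(gaussianReal 0 1) = ∫ x, gaussianPDFReal 0 1 x * g x := by
  rw [gaussianReal_of_var_ne_zero 0 one_ne_zero]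
  have hmeas : Measurable fun x => (gaussianPDFReal 0 1 x).toNNReal :=
    (measurable_gaussianPDFReal 0 1).real_toNNReal
  have : (gaussianPDF 0 1) = fun x => ((gaussianPDFReal 0 1 x).toNNReal : ENNReal) := by
    funext x
    simp [gaussianPDF, ENNReal.ofReal]
  rw [this, integral_withDensity_eq_integral_smul hmeas g]
  congr 1
  funext x
  simp [NNReal.smul_def, Real.coe_toNNReal _ (gaussianPDFReal_nonneg 0 1 x)]

lemma ici_pdf (c : ℝ) : ∫ y in Ici c, gaussianPDFReal 0 1 y = stdNormalCDF (-c) := by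
  rw [stdCDF_eq]
  have h := integral_comp_neg_Iic (-c) (gaussianPDFReal 0 1)
  have hsym : ∀ x : ℝ, gaussianPDFReal 0 1 (-x) = gaussianPDFReal 0 1 x := by
    intro x; simp [pdf_eq]
  simp_rw [hsym] at h
  rw [h, neg_neg, integral_Ici_eq_integral_Ioi]

lemma shift_Ici (h : ℝ → ℝ) (c s : ℝ) :
    ∫ y in Ici c, h (y - s) = ∫ u in Ici (c - s), h u := by
  rw [← integral_indicator measurableSet_Ici, ← integral_indicator measurableSet_Ici]
  have heq : ∀ y, (Ici c).indicator (fun y => h (y - s)) y = (Ici (c - s)).indicator h (y - s) := by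
    intro y
    have hiff : c ≤ y ↔ c - s ≤ y - s := by constructor <;> intro <;> linarith
    simp only [Set.indicator_apply, mem_Ici, hiff]
  simp_rw [heq]
  exact integral_sub_right_eq_self ((Ici (c - s)).indicator h) s

lemma exp_mul_pdf (s y : ℝ) :
    Real.exp (s * y) * gaussianPDFReal 0 1 y =
      Real.exp (s ^ 2 / 2) * gaussianPDFReal 0 1 (y - s) := by
  have harg : s * y + -y ^ 2 / 2 = s ^ 2 / 2 + -(y - s) ^ 2 / 2 := by ring
  have h1 : Real.exp (s * y) * (Real.exp (-y ^ 2 / 2) / Real.sqrt (2 * Real.pi))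
      = Real.exp (s * y + -y ^ 2 / 2) / Real.sqrt (2 * Real.pi) := by rw [Real.exp_add]; ring
  have h2 : Real.exp (s ^ 2 / 2) * (Real.exp (-(y - s) ^ 2 / 2) / Real.sqrt (2 * Real.pi))
      = Real.exp (s ^ 2 / 2 + -(y - s) ^ 2 / 2) / Real.sqrt (2 * Real.pi) := by
    rw [Real.exp_add]; ring
  rw [pdf_eq, pdf_eq, h1, h2, harg]

lemma integrable_exp_mul_pdf (s : ℝ) :
    Integrable (fun y => Real.exp (s * y) * gaussianPDFReal 0 1 y) := by
  simp_rw [exp_mul_pdf]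
  exact ((integrable_gaussianPDFReal 0 1).comp_sub_right s).const_mul _

lemma ici_exp_pdf (c s : ℝ) :
    ∫ y in Ici c, Real.exp (s * y) * gaussianPDFReal 0 1 y
      = Real.exp (s ^ 2 / 2) * stdNormalCDF (s - c) := by
  simp_rw [exp_mul_pdf]
  rw [integral_const_mul, shift_Ici (gaussianPDFReal 0 1) c s, ici_pdf]
  ring_nf

theorem black_scholes_formula
    {Ω : Type*} [MeasurableSpace Ω] (μ : Measure Ω) [IsProbabilityMeasure μ]
    (B : Ω → ℝ) (hBmeas : Measurable B)
    (P₀ σ K r t : ℝ) (hP₀ : 0 < P₀) (hσ : 0 < σ) (ht : 0 < t) (hK : 0 < K)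
    (hB : Measure.map B μ = gaussianReal 0 (Real.toNNReal t))
    (d₁ d₂ : ℝ)
    (hd₁ : d₁ = (Real.log (P₀ / K) + (r + σ ^ 2 / 2) * t) / (σ * Real.sqrt t))
    (hd₂ : d₂ = d₁ - σ * Real.sqrt t) :
    Real.exp (-r * t) *
        ∫ ω, max (P₀ * Real.exp ((r - σ ^ 2 / 2) * t + σ * B ω) - K) 0 ∂μ
      = P₀ * stdNormalCDF d₁ - Real.exp (-r * t) * K * stdNormalCDF d₂ := by
  have hst : 0 < Real.sqrt t := Real.sqrt_pos.mpr ht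
  set s : ℝ := σ * Real.sqrt t with hs
  have hs0 : 0 < s := mul_pos hσ hst
  set a : ℝ := (r - σ ^ 2 / 2) * t with ha
  set A : ℝ := P₀ * Real.exp a with hA
  have hA0 : 0 < A := mul_pos hP₀ (Real.exp_pos a)
  set G : ℝ → ℝ := fun y => max (A * Real.exp (s * y) - K) 0 with hG
  -- Step 1: transfer to std gaussian
  have hmapY : Measure.map (fun ω => (Real.sqrt t)⁻¹ * B ω) μ = gaussianReal 0 1 := by
    have : (fun ω => (Real.sqrt t)⁻¹ * B ω) = (fun x => (Real.sqrt t)⁻¹ * x) ∘ B := rfl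
    rw [this, ← Measure.map_map (measurable_const_mul _) hBmeas, hB,
      gaussianReal_map_const_mul, mul_zero]
    congr 1
    apply NNReal.coe_injective
    push_cast
    rw [Real.coe_toNNReal _ ht.le, inv_pow, Real.sq_sqrt ht.le]
    exact inv_mul_cancel₀ ht.ne'
  have hGmeas : Measurable G := by
    apply Measurable.max _ measurable_const
    exact ((measurable_const_mul s).exp.const_mul A).sub_const K
  have step1 : (∫ ω, max (P₀ * Real.exp ((r - σ ^ 2 / 2) * t + σ * B ω) - K) 0 ∂μ)
      = ∫ y, G y ∂(gaussianReal 0 1) := by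
    have hpt : ∀ ω, max (P₀ * Real.exp ((r - σ ^ 2 / 2) * t + σ * B ω) - K) 0
        = G ((Real.sqrt t)⁻¹ * B ω) := by
      intro ω
      simp only [hG]
      have harg : s * ((Real.sqrt t)⁻¹ * B ω) = σ * B ω := by
        rw [hs]; field_simp
      rw [harg, ← ha, Real.exp_add, ← mul_assoc, ← hA]
    simp_rw [hpt]
    rw [← hmapY]
    exact (integral_map (hBmeas.const_mul _).aemeasurable hGmeas.aestronglyMeasurable).symm
  -- Step 2: density
  rw [step1, integral_gauss_one]
  -- Step 3: indicator form
  set c : ℝ := Real.log (K / A) / s with hc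
  have hind : ∀ y, gaussianPDFReal 0 1 y * G y
      = (Ici c).indicator (fun y => A * (Real.exp (s * y) * gaussianPDFReal 0 1 y)
          - K * gaussianPDFReal 0 1 y) y := by
    intro y
    simp only [Set.indicator_apply, mem_Ici]
    by_cases hy : c ≤ y
    · rw [if_pos hy]
      have h1 : K ≤ A * Real.exp (s * y) := by
        have h2 : Real.log (K / A) ≤ s * y := by
          rw [hc] at hy
          calc Real.log (K / A) = s * (Real.log (K / A) / s) := by field_simp
          _ ≤ s * y := by nlinarith
        have := (Real.log_le_iff_le_exp (div_pos hK hA0)).mp h2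
        rw [div_le_iff₀ hA0] at this
        linarith
      rw [hG]
      simp only [max_eq_left (by linarith : (0:ℝ) ≤ A * Real.exp (s * y) - K)]
      ring
    · rw [if_neg hy]
      push_neg at hy
      have h1 : A * Real.exp (s * y) ≤ K := by
        have h2 : s * y < Real.log (K / A) := by
          rw [hc] at hy
          nlinarith [(lt_div_iff₀ hs0).mp hy]
        have := (Real.lt_log_iff_exp_lt (div_pos hK hA0)).mp h2
        rw [lt_div_iff₀ hA0] at this
        nlinarith
      rw [hG]
      simp only [max_eq_right (by linarith : A * Real.exp (s * y) - K ≤ 0)]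
      ring
  simp_rw [hind]
  rw [integral_indicator measurableSet_Ici]
  -- Step 4: split
  have hI1 : IntegrableOn (fun y => Real.exp (s * y) * gaussianPDFReal 0 1 y) (Ici c) :=
    (integrable_exp_mul_pdf s).integrableOn
  have hI2 : IntegrableOn (gaussianPDFReal 0 1) (Ici c) :=
    (integrable_gaussianPDFReal 0 1).integrableOn
  rw [integral_sub (hI1.const_mul A) (hI2.const_mul K), integral_const_mul, integral_const_mul,
    ici_exp_pdf, ici_pdf]
  -- Step 5: algebra
  have hss : s ^ 2 = σ ^ 2 * t := by
    rw [hs, mul_pow, Real.sq_sqrt ht.le]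
  have hlogA : Real.log A = Real.log P₀ + a := by
    rw [hA, Real.log_mul hP₀.ne' (Real.exp_ne_zero a), Real.log_exp]
  have hd2' : d₂ = (Real.log (P₀ / K) + a) / s := by
    rw [hd₂, hd₁, ha]
    field_simp
    nlinarith [hss]
  have hd2 : -c = d₂ := by
    rw [hc, hd2', Real.log_div hK.ne' hA0.ne', hlogA, Real.log_div hP₀.ne' hK.ne']
    ring
  have hd1 : s - c = d₁ := by
    rw [sub_eq_add_neg, hd2, hd₂]; ring
  rw [hd1, hd2]
  have key : Real.exp (-r * t) * (A * Real.exp (s ^ 2 / 2)) = P₀ := by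
    have h0 : Real.exp (-r * t) * (A * Real.exp (s ^ 2 / 2))
        = P₀ * Real.exp (-r * t + a + s ^ 2 / 2) := by
      rw [hA, Real.exp_add, Real.exp_add]; ring
    rw [h0, ha, hss]
    have hz : -r * t + (r - σ ^ 2 / 2) * t + σ ^ 2 * t / 2 = 0 := by ring
    rw [hz, Real.exp_zero, mul_one]
  calc Real.exp (-r * t) * (A * (Real.exp (s ^ 2 / 2) * stdNormalCDF d₁) - K * stdNormalCDF d₂)
      = Real.exp (-r * t) * (A * Real.exp (s ^ 2 / 2)) * stdNormalCDF d₁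
        - Real.exp (-r * t) * K * stdNormalCDF d₂ := by ring
    _ = _ := by rw [key]
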